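/- arXiv:1906.00074 — 4 statements merged into one kernel-verified Lean document; each statement's English description precedes it below -/
import Mathlib

section
/- Let V be a finite set and for each element v ∈ V let T_v be a finite family of "covering elements" from a ground set A together with a threshold t_v ∈ ℕ, and define the coverage function g : Finset A → ℕ by g(S) = |{v ∈ V : |S ∩ T_v| ≥ t_v}|. Let r ≥ 1, let S ⊆ A, and let S* ⊆ A with |S*| = k and k ≥ r. Suppose that for every v with g-contribution in S* but not in S there exists a subset τ ⊆ S* with |τ| = r such that v contributes to g(S ∪ τ). Then there exists τ* ⊆ S* with |τ*| = r such that g(S ∪ τ*) − g(S) ≥ (g(S*) − g(S)) / C(k, r), where C(k,r) is the binomial coefficient. -/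
/-- Averaging bound for threshold coverage functions (Lemma 1 core). -/
theorem stmt0 {A V : Type*} [DecidableEq A] [DecidableEq V]
    (Vset : Finset V) (T : V → Finset A) (t : V → ℕ) (r k : ℕ)
    (hr : 1 ≤ r) (S Sstar : Finset A) (hcard : Sstar.card = k) (hkr : r ≤ k)
    (g : Finset A → ℕ)
    (hg : ∀ X, g X = (Vset.filter (fun v => t v ≤ (X ∩ T v).card)).card)
    (hcov : ∀ v ∈ Vset, t v ≤ (Sstar ∩ T v).card → ¬ t v ≤ (S ∩ T v).card →
      ∃ τ ⊆ Sstar, τ.card = r ∧ t v ≤ ((S ∪ τ) ∩ T v).card) :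
    ∃ τ ⊆ Sstar, τ.card = r ∧
      ((g (S ∪ τ) : ℝ) - g S) ≥ ((g Sstar : ℝ) - g S) / (k.choose r) := by
  classical
  set 𝒯 := Sstar.powersetCard r with h𝒯
  have h𝒯card : 𝒯.card = k.choose r := by
    rw [h𝒯, Finset.card_powersetCard, hcard]
  have hpos : 0 < k.choose r := Nat.choose_pos hkr
  have hne : 𝒯.Nonempty := by
    rw [h𝒯, Finset.powersetCard_nonempty]
    omega
  set F : Finset A → Finset V := fun X => Vset.filter (fun v => t v ≤ (X ∩ T v).card) with hF
  have hmono : ∀ τ, F S ⊆ F (S ∪ τ) := by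
    intro τ v hv
    simp only [hF, Finset.mem_filter] at hv ⊢
    exact ⟨hv.1, le_trans hv.2 (Finset.card_le_card
      (Finset.inter_subset_inter Finset.subset_union_left (le_refl _)))⟩
  set D : Finset V := F Sstar \ F S with hD
  -- D is covered by the union of the τ-gains
  have hsub : D ⊆ 𝒯.biUnion (fun τ => F (S ∪ τ) \ F S) := by
    intro v hv
    rw [hD, Finset.mem_sdiff] at hv
    simp only [hF, Finset.mem_filter] at hv
    obtain ⟨⟨hvV, hvS⟩, hvNot⟩ := hv
    have hvNot' : ¬ t v ≤ (S ∩ T v).card := by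
      intro h; exact hvNot ⟨hvV, h⟩
    obtain ⟨τ, hτsub, hτcard, hτcov⟩ := hcov v hvV hvS hvNot'
    refine Finset.mem_biUnion.2 ⟨τ, ?_, ?_⟩
    · rw [h𝒯, Finset.mem_powersetCard]; exact ⟨hτsub, hτcard⟩
    · rw [Finset.mem_sdiff]
      refine ⟨Finset.mem_filter.2 ⟨hvV, hτcov⟩, ?_⟩
      intro h
      exact hvNot' (Finset.mem_filter.1 h).2
  have hDcard : D.card ≤ ∑ τ ∈ 𝒯, (F (S ∪ τ) \ F S).card :=
    le_trans (Finset.card_le_card hsub) (Finset.card_biUnion_le)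
  -- translate to ℝ
  have hgF : ∀ X, (g X : ℝ) = ((F X).card : ℝ) := by
    intro X; rw [hg X]
  have hgain : ∀ τ, ((F (S ∪ τ) \ F S).card : ℝ) = (g (S ∪ τ) : ℝ) - g S := by
    intro τ
    rw [Finset.card_sdiff_of_subset (hmono τ), hgF, hgF]
    have := Finset.card_le_card (hmono τ)
    push_cast [Nat.cast_sub this]
    ring
  have hlow : (g Sstar : ℝ) - g S ≤ (D.card : ℝ) := by
    rw [hgF, hgF, hD]
    have h1 : (F Sstar).card ≤ (F Sstar \ F S).card + (F S).card :=
      Finset.card_le_card_sdiff_add_card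
    have := (Nat.cast_le (α := ℝ)).2 h1
    push_cast at this
    linarith
  have hsum : (g Sstar : ℝ) - g S ≤ ∑ τ ∈ 𝒯, ((g (S ∪ τ) : ℝ) - g S) := by
    calc (g Sstar : ℝ) - g S ≤ (D.card : ℝ) := hlow
      _ ≤ ∑ τ ∈ 𝒯, ((F (S ∪ τ) \ F S).card : ℝ) := by
          exact_mod_cast (Nat.cast_le (α := ℝ)).2 hDcard
      _ = ∑ τ ∈ 𝒯, ((g (S ∪ τ) : ℝ) - g S) := by
          exact Finset.sum_congr rfl (fun τ _ => hgain τ)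
  -- average argument
  have hconst : ∑ _τ ∈ 𝒯, ((g Sstar : ℝ) - g S) / (k.choose r)
      ≤ ∑ τ ∈ 𝒯, ((g (S ∪ τ) : ℝ) - g S) := by
    rw [Finset.sum_const, h𝒯card, nsmul_eq_mul]
    have hne0 : ((k.choose r : ℝ)) ≠ 0 := by positivity
    rw [mul_div_cancel₀ _ hne0]
    exact hsum
  obtain ⟨τ, hτ, hle⟩ := Finset.exists_le_of_sum_le hne hconst
  rw [h𝒯, Finset.mem_powersetCard] at hτ
  exact ⟨τ, hτ.1, hτ.2, hle⟩
end

section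
/- Let f : Finset A → ℝ be a monotone submodular set function with f(∅) ≥ 0 on a finite ground set A, let k and ν be positive integers, and let T* ⊆ A be any set with |T*| = k. If k ≥ ν, then there exists a subset T ⊆ T* with |T| = ⌊k/ν⌋ such that f(T) ≥ f(T*) / ⌈k/⌊k/ν⌋⌉. -/
/-!
Take `T` to be a best `⌊k/ν⌋`-subset of `T*`; by monotonicity it beats every smaller subset.
Monotone submodular functions with `f ∅ ≥ 0` are subadditive, and `T*` splits into
`⌈k/⌊k/ν⌋⌉` blocks of size at most `⌊k/ν⌋`, so `f T* ≤ ⌈k/⌊k/ν⌋⌉ * f T`.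
-/

open Finset

section SetFunction

variable {A : Type*} {f : Finset A → ℝ}

theorem exists_subset_card_eq_forall_le (hmono : Monotone f) {U : Finset A} {m : ℕ}
    (hm : m ≤ U.card) : ∃ T ⊆ U, T.card = m ∧ ∀ B ⊆ U, B.card ≤ m → f B ≤ f T := by
  obtain ⟨T, hT, hTmax⟩ := exists_max_image (powersetCard m U) f (powersetCard_nonempty.2 hm)
  obtain ⟨hTU, hTcard⟩ := mem_powersetCard.1 hT
  refine ⟨T, hTU, hTcard, fun B hBU hB => ?_⟩
  obtain ⟨C, hBC, hCU, hC⟩ := exists_subsuperset_card_eq hBU hB hm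
  exact (hmono hBC).trans (hTmax C (mem_powersetCard.2 ⟨hCU, hC⟩))

variable [DecidableEq A]

theorem union_le_add_of_submodular (hmono : Monotone f)
    (hsub : ∀ S S' : Finset A, S ⊆ S' → ∀ v ∉ S',
      f (insert v S) - f S ≥ f (insert v S') - f S')
    (hempty : 0 ≤ f ∅) (S T : Finset A) : f (S ∪ T) ≤ f S + f T := by
  suffices f (S ∪ T) - f S ≤ f T - f ∅ by linarith
  induction T using Finset.induction_on with
  | empty => simp
  | @insert v T _ ih =>
    have hmarginal : f (insert v (S ∪ T)) - f (S ∪ T) ≤ f (insert v T) - f T := by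
      by_cases hv : v ∈ S ∪ T
      · rw [insert_eq_self.2 hv, sub_self, sub_nonneg]
        exact hmono (subset_insert v T)
      · exact hsub T (S ∪ T) subset_union_right v hv
    rw [union_insert]
    linarith

theorem le_mul_of_card_le_mul (hsubadd : ∀ S T : Finset A, f (S ∪ T) ≤ f S + f T)
    {S : Finset A} {m n : ℕ} {M : ℝ} (hM : ∀ B ⊆ S, B.card ≤ m → f B ≤ M) (hn : 0 < n)
    (hS : S.card ≤ n * m) : f S ≤ n * M := by
  induction n, hn using Nat.le_induction generalizing S with
  | base => simpa using hM S subset_rfl (by simpa using hS)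
  | succ n _ ih =>
    obtain ⟨B, hBS, hB⟩ := exists_subset_card_eq (min_le_right m S.card)
    have hrest : (S \ B).card ≤ n * m := by
      rw [card_sdiff_of_subset hBS, hB]
      rw [Nat.succ_mul] at hS
      omega
    calc f S = f (B ∪ (S \ B)) := by rw [union_sdiff_of_subset hBS]
      _ ≤ f B + f (S \ B) := hsubadd _ _
      _ ≤ M + n * M := add_le_add (hM B hBS (hB ▸ min_le_left _ _))
          (ih (fun C hC => hM C (hC.trans sdiff_subset)) hrest)
      _ = ((n + 1 : ℕ) : ℝ) * M := by push_cast; ring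

end SetFunction

theorem le_natCeil_div_mul (k : ℕ) {m : ℕ} (hm : 0 < m) : k ≤ ⌈(k : ℝ) / m⌉₊ * m := by
  have := Nat.le_ceil ((k : ℝ) / m)
  rw [div_le_iff₀ (by positivity)] at this
  exact_mod_cast this

/-- A monotone submodular function loses at most a factor `⌈k/⌊k/ν⌋⌉` when restricted
to a subset of size `⌊k/ν⌋` of an optimal set of size `k`. -/
theorem stmt12 {A : Type*} [DecidableEq A] (f : Finset A → ℝ)
    (hmono : ∀ S S' : Finset A, S ⊆ S' → f S ≤ f S')
    (hsub : ∀ S S' : Finset A, S ⊆ S' → ∀ v ∉ S',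
      f (insert v S) - f S ≥ f (insert v S') - f S')
    (hempty : 0 ≤ f ∅)
    (k ν : ℕ) (hk : 0 < k) (hν : 0 < ν) (hkν : ν ≤ k)
    (Tstar : Finset A) (hTcard : Tstar.card = k) :
    ∃ T ⊆ Tstar, T.card = k / ν ∧
      f Tstar / ((⌈(k : ℝ) / ((k / ν : ℕ) : ℝ)⌉ : ℤ) : ℝ) ≤ f T := by
  have hm : 0 < k / ν := Nat.div_pos hkν hν
  have hratio : 0 < (k : ℝ) / ((k / ν : ℕ) : ℝ) := by positivity
  obtain ⟨T, hT, hTcard', hTmax⟩ := exists_subset_card_eq_forall_le (U := Tstar) (m := k / ν)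
    (fun S S' => hmono S S') (hTcard ▸ Nat.div_le_self k ν)
  refine ⟨T, hT, hTcard', ?_⟩
  have hcover : f Tstar ≤ ⌈(k : ℝ) / ((k / ν : ℕ) : ℝ)⌉₊ * f T :=
    le_mul_of_card_le_mul
      (union_le_add_of_submodular (fun S S' => hmono S S') hsub hempty) hTmax
      (Nat.ceil_pos.2 hratio) (hTcard ▸ le_natCeil_div_mul k hm)
  rw [← natCast_ceil_eq_intCast_ceil hratio.le, div_le_iff₀ (by positivity)]
  linarith
end

section
/- Let n be a real number with n ≥ 1, let Y_1, …, Y_T be independent random variables with values in [0, 1], each with expectation μ₀ = f/n for some real f ≥ 1, and let T ≥ n² · ln(2/δ) / ε² for some ε, δ ∈ (0, 1). Then the empirical estimate F̂ = (n/T) · Σ_{t=1}^T Y_t satisfies P[|F̂ − f| ≥ ε·f] ≤ δ. -/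
/-!
Centring gives `F̂ - f = (n / T) * ∑ t, (Y_t - f / n)`, so the event is a deviation of the centred
sum by at least `r = ε f T / n`. By Hoeffding's lemma each `[0, 1]`-valued `Y_t - f / n` is
sub-Gaussian with parameter `1 / 4`, so the two one-sided Hoeffding bounds give probability at most
`2 exp (-2 r² / T) = 2 exp (-2 T ε² f² / n²)`, and `f ≥ 1` together with the lower bound on `T` make
this at most `2 exp (-log (2 / δ)) = δ`.
-/

open MeasureTheory ProbabilityTheory Real Finset
open scoped NNReal

lemma measureReal_abs_sum_sub_integral_ge_le {Ω ι : Type*} [MeasurableSpace Ω] {μ : Measure Ω}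
    {X : ι → Ω → ℝ} {a b : ℝ} (hindep : iIndepFun X μ) (hmeas : ∀ i, AEMeasurable (X i) μ)
    (hab : ∀ i, ∀ᵐ ω ∂μ, X i ω ∈ Set.Icc a b) (s : Finset ι) {r : ℝ} (hr : 0 ≤ r) :
    μ.real {ω | r ≤ |∑ i ∈ s, (X i ω - μ[X i])|} ≤
      2 * exp (-2 * r ^ 2 / (#s * (b - a) ^ 2)) := by
  have := hindep.isProbabilityMeasure
  have hsubG : ∀ i ∈ s, HasSubgaussianMGF (fun ω ↦ X i ω - μ[X i]) ((‖b - a‖₊ / 2) ^ 2) μ :=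
    fun i _ ↦ hasSubgaussianMGF_of_mem_Icc (hmeas i) (hab i)
  have hcentred : iIndepFun (fun i ω ↦ X i ω - μ[X i]) μ := by
    exact hindep.comp (fun i x ↦ x - μ[X i]) fun _ ↦ measurable_sub_const _
  have hupper := HasSubgaussianMGF.measure_sum_ge_le_of_iIndepFun hcentred hsubG hr
  have hlower := HasSubgaussianMGF.measure_sum_ge_le_of_iIndepFun
    (hcentred.comp (fun _ x ↦ -x) fun _ ↦ measurable_neg) (fun i hi ↦ (hsubG i hi).neg) hr
  have hexponent : -r ^ 2 / (2 * ((∑ i ∈ s, (‖b - a‖₊ / 2) ^ 2 : ℝ≥0) : ℝ)) =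
      -2 * r ^ 2 / (#s * (b - a) ^ 2) := by
    have hsum : ((∑ i ∈ s, (‖b - a‖₊ / 2) ^ 2 : ℝ≥0) : ℝ) = #s * (b - a) ^ 2 / 4 := by
      push_cast
      rw [Finset.sum_const, nsmul_eq_mul, Real.norm_eq_abs, div_pow, sq_abs]
      ring
    rw [hsum, show 2 * (#s * (b - a) ^ 2 / 4) = (#s * (b - a) ^ 2 : ℝ) / 2 by ring,
      div_div_eq_mul_div]
    ring
  rw [hexponent] at hupper hlower
  calc μ.real {ω | r ≤ |∑ i ∈ s, (X i ω - μ[X i])|}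
      ≤ μ.real ({ω | r ≤ ∑ i ∈ s, (X i ω - μ[X i])} ∪
          {ω | r ≤ ∑ i ∈ s, -(X i ω - μ[X i])}) := by
        refine measureReal_mono fun ω hω ↦ ?_
        rw [Set.mem_ofPred_eq, le_abs, ← Finset.sum_neg_distrib] at hω
        exact hω
    _ ≤ _ := measureReal_union_le _ _
    _ ≤ _ := by simp only [Function.comp_apply] at hlower; linarith

theorem stmt15_general {Ω : Type*} [MeasureSpace Ω]
    (n f ε δ : ℝ) (T : ℕ) (hn : 1 ≤ n) (hf : 1 ≤ f)
    (hε : ε ∈ Set.Ioo (0 : ℝ) 1) (hδ : δ ∈ Set.Ioo (0 : ℝ) 1)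
    (Y : Fin T → Ω → ℝ)
    (hmeas : ∀ t, Measurable (Y t))
    (hindep : iIndepFun Y ℙ)
    (hrange : ∀ t, ∀ᵐ ω ∂ℙ, Y t ω ∈ Set.Icc (0 : ℝ) 1)
    (hmean : ∀ t, ∫ ω, Y t ω ∂ℙ = f / n)
    (hT : (T : ℝ) ≥ n ^ 2 * Real.log (2 / δ) / ε ^ 2) :
    (ℙ {ω | ε * f ≤ |(n / T) * ∑ t, Y t ω - f|}).toReal ≤ δ := by
  obtain ⟨hε0, -⟩ := hε
  obtain ⟨hδ0, hδ1⟩ := hδ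
  have hlog : 0 < log (2 / δ) := log_pos (by rw [lt_div_iff₀ hδ0]; linarith)
  have hT0 : (0 : ℝ) < T := lt_of_lt_of_le (by positivity) hT
  have hscale : (0 : ℝ) < n / T := by positivity
  have hevent : {ω | ε * f ≤ |(n / T) * ∑ t, Y t ω - f|} =
      {ω | ε * f / (n / T) ≤ |∑ t, (Y t ω - ∫ ω, Y t ω ∂ℙ)|} := by
    ext ω
    have hcentre : (n / T) * ∑ t, Y t ω - f = (n / T) * ∑ t, (Y t ω - ∫ ω, Y t ω ∂ℙ) := by
      simp only [hmean, Finset.sum_sub_distrib, Finset.sum_const, Finset.card_univ,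
        Fintype.card_fin, nsmul_eq_mul]
      field_simp
    rw [Set.mem_ofPred_eq, Set.mem_ofPred_eq, hcentre, abs_mul, abs_of_pos hscale,
      div_le_iff₀' hscale]
  have hexponent : log (2 / δ) ≤ 2 * (ε * f / (n / T)) ^ 2 / T :=
    calc log (2 / δ) ≤ T * ε ^ 2 / n ^ 2 := by
          rw [le_div_iff₀ (by positivity), mul_comm]
          rwa [ge_iff_le, div_le_iff₀ (by positivity)] at hT
      _ ≤ 2 * f ^ 2 * (T * ε ^ 2 / n ^ 2) := le_mul_of_one_le_left (by positivity) (by nlinarith)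
      _ = 2 * (ε * f / (n / T)) ^ 2 / T := by field_simp
  calc (ℙ {ω | ε * f ≤ |(n / T) * ∑ t, Y t ω - f|}).toReal
      = volume.real {ω | ε * f / (n / T) ≤ |∑ t, (Y t ω - ∫ ω, Y t ω ∂ℙ)|} := by
        rw [← measureReal_def, hevent]
    _ ≤ 2 * exp (-2 * (ε * f / (n / T)) ^ 2 / T) := by
        simpa using measureReal_abs_sum_sub_integral_ge_le hindep
          (fun t ↦ (hmeas t).aemeasurable) hrange univ (r := ε * f / (n / T)) (by positivity)
    _ ≤ 2 * exp (-log (2 / δ)) := by gcongr; rw [neg_mul, neg_div]; exact neg_le_neg hexponent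
    _ = δ := by rw [exp_neg, exp_log (by positivity), inv_div]; ring

/-- Sampling approximation guarantee (Chernoff/Hoeffding bound for the estimator). -/
theorem stmt15 {Ω : Type*} [MeasureSpace Ω] [IsProbabilityMeasure (ℙ : Measure Ω)]
    (n f ε δ : ℝ) (T : ℕ) (hn : 1 ≤ n) (hf : 1 ≤ f)
    (hε : ε ∈ Set.Ioo (0 : ℝ) 1) (hδ : δ ∈ Set.Ioo (0 : ℝ) 1)
    (Y : Fin T → Ω → ℝ)
    (hmeas : ∀ t, Measurable (Y t))
    (hindep : iIndepFun Y ℙ)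
    (hrange : ∀ t, ∀ᵐ ω ∂ℙ, Y t ω ∈ Set.Icc (0 : ℝ) 1)
    (hmean : ∀ t, ∫ ω, Y t ω ∂ℙ = f / n)
    (hT : (T : ℝ) ≥ n ^ 2 * Real.log (2 / δ) / ε ^ 2) :
    (ℙ {ω | ε * f ≤ |(n / T) * ∑ t, Y t ω - f|}).toReal ≤ δ :=
  stmt15_general n f ε δ T hn hf hε hδ Y hmeas hindep hrange hmean hT
end

section
/- Let 0 < ε < 1 and let k, ν, ℓ be integers with 1 ≤ ℓ ≤ ν − 1 and k ≥ 2ν/ε, and write C = C(k, ν − ℓ) for the binomial coefficient. Then 1 − (1 − (1 − ε/2)/C)^{(1 − ε/2)·k/(ν − ℓ)} ≥ (1 − 1/e − ε) / C(k − 1, ν − ℓ − 1). -/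
/-!
With `r = ν - ℓ`, `a = 1 - ε/2` and `C = C(k, r)`, the bound `1 - x ≤ e^{-x}` gives
`(1 - a/C)^{a k / r} ≤ exp (-a² k / (r C)) = exp (-a² / C(k-1, r-1))`. Concavity of `1 - e^{-y}`
on `[0, 1]` turns `1 - exp (-y)` into at least `y (1 - 1/e)`, and `a² (1 - 1/e) ≥ 1 - 1/e - ε`.
-/

open Real

theorem Real.one_sub_rpow_le_exp_neg_mul {x t : ℝ} (hx : x ≤ 1) (ht : 0 ≤ t) :
    (1 - x) ^ t ≤ exp (-(x * t)) :=
  calc (1 - x) ^ t ≤ exp (-x) ^ t := rpow_le_rpow (sub_nonneg.2 hx) (one_sub_le_exp_neg x) ht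
    _ = exp (-(x * t)) := by rw [← exp_mul, neg_mul]

theorem Real.mul_one_sub_exp_neg_one_le {y : ℝ} (hy0 : 0 ≤ y) (hy1 : y ≤ 1) :
    y * (1 - exp (-1)) ≤ 1 - exp (-y) := by
  have h := convexOn_exp.2 (Set.mem_univ 0) (Set.mem_univ (-1)) (sub_nonneg.2 hy1) hy0
    (sub_add_cancel 1 y)
  simp only [smul_eq_mul, mul_zero, mul_neg_one, zero_add, exp_zero, mul_one] at h
  linarith

theorem div_choose_succ_mul_eq_sq_div_choose {a : ℝ} {m s : ℕ} (hs : s ≤ m) :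
    a / (m + 1).choose (s + 1) * (a * (m + 1 : ℕ) / (s + 1 : ℕ)) = a ^ 2 / m.choose s := by
  have hid : ((m + 1 : ℕ) * m.choose s : ℝ) = (m + 1).choose (s + 1) * (s + 1 : ℕ) := by
    exact_mod_cast Nat.add_one_mul_choose_eq m s
  have hC : (m.choose s : ℝ) ≠ 0 := Nat.cast_ne_zero.2 (Nat.choose_pos hs).ne'
  have hC' : ((m + 1).choose (s + 1) : ℝ) ≠ 0 :=
    Nat.cast_ne_zero.2 (Nat.choose_pos (Nat.succ_le_succ hs)).ne'
  field_simp
  linear_combination a ^ 2 * hid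

theorem sq_mul_one_sub_exp_neg_one_div_choose_le {a : ℝ} (ha0 : 0 ≤ a) (ha1 : a ≤ 1) {k r : ℕ}
    (hr : 1 ≤ r) (hrk : r ≤ k) :
    a ^ 2 * (1 - exp (-1)) / (k - 1).choose (r - 1) ≤ 1 - (1 - a / k.choose r) ^ (a * k / r) := by
  obtain ⟨m, rfl⟩ : ∃ m, k = m + 1 := ⟨k - 1, by omega⟩
  obtain ⟨s, rfl⟩ : ∃ s, r = s + 1 := ⟨r - 1, by omega⟩
  simp only [Nat.add_sub_cancel]
  have hC : (1 : ℝ) ≤ m.choose s := Nat.one_le_cast.2 (Nat.choose_pos (by omega))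
  have hC' : (1 : ℝ) ≤ (m + 1).choose (s + 1) := Nat.one_le_cast.2 (Nat.choose_pos hrk)
  calc a ^ 2 * (1 - exp (-1)) / m.choose s = a ^ 2 / m.choose s * (1 - exp (-1)) := by ring
    _ ≤ 1 - exp (-(a ^ 2 / m.choose s)) :=
      mul_one_sub_exp_neg_one_le (by positivity) (div_le_one_of_le₀ (by nlinarith) (by positivity))
    _ = 1 - exp (-(a / (m + 1).choose (s + 1) * (a * (m + 1 : ℕ) / (s + 1 : ℕ)))) := by
      rw [div_choose_succ_mul_eq_sq_div_choose (by omega)]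
    _ ≤ 1 - (1 - a / (m + 1).choose (s + 1)) ^ (a * (m + 1 : ℕ) / (s + 1 : ℕ)) := by
      gcongr
      exact one_sub_rpow_le_exp_neg_mul (div_le_one_of_le₀ (by linarith) (by positivity))
        (by positivity)

/-- Final inequality in the approximation-ratio proof of GreedyTuple (Theorem 3). -/
theorem stmt17 (ε : ℝ) (k ν ℓ : ℕ) (hε0 : 0 < ε) (hε1 : ε < 1)
    (hℓ1 : 1 ≤ ℓ) (hℓ2 : ℓ ≤ ν - 1) (hk : (k : ℝ) ≥ 2 * (ν : ℝ) / ε) :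
    1 - (1 - (1 - ε / 2) / (k.choose (ν - ℓ) : ℝ))
          ^ ((1 - ε / 2) * (k : ℝ) / ((ν : ℝ) - (ℓ : ℝ)))
      ≥ (1 - 1 / Real.exp 1 - ε) / ((k - 1).choose (ν - ℓ - 1) : ℝ) := by
  have hνk : (ν : ℝ) ≤ k :=
    le_trans ((le_div_iff₀ hε0).2 (by nlinarith [(Nat.cast_nonneg ν : (0 : ℝ) ≤ ν)])) hk
  have hrk : ν - ℓ ≤ k := (Nat.sub_le ν ℓ).trans (by exact_mod_cast hνk)
  have hcast : (ν : ℝ) - ℓ = (ν - ℓ : ℕ) := by rw [Nat.cast_sub (by omega)]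
  have hnum : 1 - 1 / exp 1 - ε ≤ (1 - ε / 2) ^ 2 * (1 - exp (-1)) := by
    have he0 : 0 ≤ 1 / exp 1 := by positivity
    have he1 : 1 / exp 1 ≤ 1 := (div_le_one (exp_pos 1)).2 (one_le_exp zero_le_one)
    rw [exp_neg, inv_eq_one_div]
    nlinarith [mul_nonneg hε0.le he0, mul_nonneg (sq_nonneg ε) (sub_nonneg.2 he1)]
  rw [hcast, ge_iff_le]
  calc (1 - 1 / exp 1 - ε) / ((k - 1).choose (ν - ℓ - 1) : ℝ)
      ≤ (1 - ε / 2) ^ 2 * (1 - exp (-1)) / ((k - 1).choose (ν - ℓ - 1) : ℝ) := by gcongr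
    _ ≤ _ := sq_mul_one_sub_exp_neg_one_div_choose_le (by linarith) (by linarith) (by omega) hrk
end
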